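/- Let V be a finite type, c : V → V → ℝ≥0 a capacity function, S ⊆ V a subset, P ≥ 1 an integer, and s, t distinct vertices of V with s ∉ S and t ∉ S. Then the maximum s-t flow value of the P-fold replication c_P of S (with s and t identified with their unique copies) equals the maximum s-t flow value of the P-reweighting c' of c with respect to S. -/
import Mathlib


/-!
STATEMENT 0: For a capacity function `c : V → V → ℝ≥0`, a subset `S ⊆ V`, an integer
`P ≥ 1`, and distinct `s, t ∉ S`, the maximum s-t flow value of the P-fold replication
of `S` equals the maximum s-t flow value of the P-reweighting of `c` w.r.t. `S`.
-/

open Finset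

attribute [local instance] Classical.propDecidable

noncomputable section

/-- `f` is an `s`-`t` flow for the capacity function `c`. -/
def IsFlow {W : Type*} [Fintype W] (c : W → W → NNReal) (s t : W) (f : W → W → ℝ) : Prop :=
  (∀ u v, 0 ≤ f u v ∧ f u v ≤ (c u v : ℝ)) ∧
  ∀ v, v ≠ s → v ≠ t → (∑ u, f u v) = (∑ w, f v w)

/-- The value of a flow `f` with source `s`. -/
def flowValue {W : Type*} [Fintype W] (f : W → W → ℝ) (s : W) : ℝ :=
  (∑ w, f s w) - (∑ u, f u s)

/-- The maximum `s`-`t` flow value (the greatest value attained by an `s`-`t` flow). -/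
def maxFlowValue {W : Type*} [Fintype W] (c : W → W → NNReal) (s t : W) : ℝ :=
  sSup {μ : ℝ | ∃ f, IsFlow c s t f ∧ flowValue f s = μ}

/-- The capacity function of the `P`-fold replication of the subset `S`. -/
def repCap {V : Type*} (c : V → V → NNReal) (S : Set V) (P : ℕ) :
    ({v : V // v ∉ S} ⊕ (↥S × Fin P)) → ({v : V // v ∉ S} ⊕ (↥S × Fin P)) → NNReal
  | Sum.inl u, Sum.inl v => c u.1 v.1
  | Sum.inl u, Sum.inr (v, _) => c u.1 v.1
  | Sum.inr (v, _), Sum.inl u => c v.1 u.1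
  | Sum.inr (u, i), Sum.inr (v, j) => if i = j then c u.1 v.1 else 0

/-- The `P`-reweighting of `c` with respect to `S`. -/
def reweight {V : Type*} (c : V → V → NNReal) (S : Set V) (P : ℕ) : V → V → NNReal :=
  fun u v => if u ∈ S ∨ v ∈ S then (P : NNReal) * c u v else c u v

section Aux

variable {V : Type*} [Fintype V] (S : Set V) (P : ℕ)

/-- Projection from the replicated vertex set back to `V`. -/
def proj : ({v : V // v ∉ S} ⊕ (↥S × Fin P)) → V
  | Sum.inl u => u.1
  | Sum.inr (v, _) => v.1

lemma sum_split (h : V → ℝ) :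
    ∑ u, h u = (∑ u : ↥S, h u.1) + ∑ u : {v : V // v ∉ S}, h u.1 := by
  rw [← Equiv.sum_comp (Equiv.sumCompl (· ∈ S)) h, Fintype.sum_sum_type]
  rfl

lemma sum_fiber_not_mem {u : V} (hu : u ∉ S)
    (F : ({v : V // v ∉ S} ⊕ (↥S × Fin P)) → ℝ) :
    ∑ x, (if proj S P x = u then F x else 0) = F (Sum.inl ⟨u, hu⟩) := by
  rw [Fintype.sum_sum_type]
  have h2 : ∑ p : ↥S × Fin P, (if proj S P (Sum.inr p) = u then F (Sum.inr p) else 0) = 0 := by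
    apply Finset.sum_eq_zero
    rintro ⟨v, i⟩ _
    rw [show proj S P (Sum.inr (v, i)) = v.1 from rfl, if_neg]
    exact fun h => hu (h ▸ v.2)
  rw [h2, add_zero]
  have h1 : ∀ w : {v : V // v ∉ S},
      (proj S P (Sum.inl w) = u) = (w = (⟨u, hu⟩ : {v : V // v ∉ S})) := by
    intro w
    show (w.1 = u) = _
    exact propext ⟨fun h => Subtype.ext h, fun h => congrArg Subtype.val h⟩
  simp only [h1]
  simp [Finset.sum_ite_eq']

lemma sum_fiber_mem {u : V} (hu : u ∈ S)
    (F : ({v : V // v ∉ S} ⊕ (↥S × Fin P)) → ℝ) :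
    ∑ x, (if proj S P x = u then F x else 0) = ∑ i : Fin P, F (Sum.inr (⟨u, hu⟩, i)) := by
  rw [Fintype.sum_sum_type]
  have h1 : ∑ w : {v : V // v ∉ S},
      (if proj S P (Sum.inl w) = u then F (Sum.inl w) else 0) = 0 := by
    apply Finset.sum_eq_zero
    intro w _
    rw [if_neg]
    exact fun h => w.2 ((show w.1 = u from h) ▸ hu)
  rw [h1, zero_add, Fintype.sum_prod_type]
  have h2 : ∀ v : ↥S,
      (∑ i : Fin P, if proj S P (Sum.inr (v, i)) = u then F (Sum.inr (v, i)) else 0)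
      = if v = (⟨u, hu⟩ : ↥S) then ∑ i : Fin P, F (Sum.inr (v, i)) else 0 := by
    intro v
    by_cases h : v = (⟨u, hu⟩ : ↥S)
    · rw [if_pos h]
      exact Finset.sum_congr rfl fun i _ => if_pos (congrArg Subtype.val h)
    · rw [if_neg h]
      apply Finset.sum_eq_zero
      intro i _
      rw [if_neg]
      exact fun h' => h (Subtype.ext h')
  simp only [h2]
  rw [Finset.sum_ite_eq' Finset.univ (⟨u, hu⟩ : ↥S)]
  simp

lemma sum_proj (A : V → ℝ) (x : ({v : V // v ∉ S} ⊕ (↥S × Fin P))) :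
    ∑ u : V, (if proj S P x = u then A u else 0) = A (proj S P x) := by
  simp [Finset.sum_ite_eq]

/-- Push a flow on the replicated graph down to `V` by summing over copies. -/
def flatten (f : ({v : V // v ∉ S} ⊕ (↥S × Fin P)) → ({v : V // v ∉ S} ⊕ (↥S × Fin P)) → ℝ) :
    V → V → ℝ :=
  fun u v => ∑ x, if proj S P x = u then (∑ y, if proj S P y = v then f x y else 0) else 0

lemma flatten_row (f : ({v : V // v ∉ S} ⊕ (↥S × Fin P)) →
    ({v : V // v ∉ S} ⊕ (↥S × Fin P)) → ℝ) (v : V) :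
    ∑ w, flatten S P f v w = ∑ x, (if proj S P x = v then ∑ z, f x z else 0) := by
  unfold flatten
  rw [Finset.sum_comm]
  apply Finset.sum_congr rfl
  intro x _
  by_cases h : proj S P x = v
  · simp only [if_pos h]
    rw [Finset.sum_comm]
    exact Finset.sum_congr rfl fun y _ => sum_proj S P (fun _ => f x y) y
  · simp only [if_neg h, Finset.sum_const_zero]

lemma flatten_col (f : ({v : V // v ∉ S} ⊕ (↥S × Fin P)) →
    ({v : V // v ∉ S} ⊕ (↥S × Fin P)) → ℝ) (v : V) :
    ∑ u, flatten S P f u v = ∑ y, (if proj S P y = v then ∑ x, f x y else 0) := by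
  unfold flatten
  rw [Finset.sum_comm]
  have h1 : ∀ x, (∑ u : V, if proj S P x = u
      then (∑ y, if proj S P y = v then f x y else 0) else 0)
      = ∑ y, if proj S P y = v then f x y else 0 :=
    fun x => sum_proj S P _ x
  rw [Finset.sum_congr rfl fun x _ => h1 x, Finset.sum_comm]
  apply Finset.sum_congr rfl
  intro y _
  by_cases h : proj S P y = v
  · simp only [if_pos h]
  · simp only [if_neg h, Finset.sum_const_zero]

lemma flatten_eval_nn (f : ({v : V // v ∉ S} ⊕ (↥S × Fin P)) →
    ({v : V // v ∉ S} ⊕ (↥S × Fin P)) → ℝ) {u v : V} (hu : u ∉ S) (hv : v ∉ S) :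
    flatten S P f u v = f (Sum.inl ⟨u, hu⟩) (Sum.inl ⟨v, hv⟩) := by
  unfold flatten
  rw [sum_fiber_not_mem S P hu (fun x => ∑ y, if proj S P y = v then f x y else 0),
    sum_fiber_not_mem S P hv]

lemma flatten_eval_ns (f : ({v : V // v ∉ S} ⊕ (↥S × Fin P)) →
    ({v : V // v ∉ S} ⊕ (↥S × Fin P)) → ℝ) {u v : V} (hu : u ∉ S) (hv : v ∈ S) :
    flatten S P f u v = ∑ i : Fin P, f (Sum.inl ⟨u, hu⟩) (Sum.inr (⟨v, hv⟩, i)) := by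
  unfold flatten
  rw [sum_fiber_not_mem S P hu (fun x => ∑ y, if proj S P y = v then f x y else 0),
    sum_fiber_mem S P hv]

lemma flatten_eval_sn (f : ({v : V // v ∉ S} ⊕ (↥S × Fin P)) →
    ({v : V // v ∉ S} ⊕ (↥S × Fin P)) → ℝ) {u v : V} (hu : u ∈ S) (hv : v ∉ S) :
    flatten S P f u v = ∑ i : Fin P, f (Sum.inr (⟨u, hu⟩, i)) (Sum.inl ⟨v, hv⟩) := by
  unfold flatten
  rw [sum_fiber_mem S P hu (fun x => ∑ y, if proj S P y = v then f x y else 0)]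
  exact Finset.sum_congr rfl fun i _ => sum_fiber_not_mem S P hv _

lemma flatten_eval_ss (f : ({v : V // v ∉ S} ⊕ (↥S × Fin P)) →
    ({v : V // v ∉ S} ⊕ (↥S × Fin P)) → ℝ) {u v : V} (hu : u ∈ S) (hv : v ∈ S) :
    flatten S P f u v =
      ∑ i : Fin P, ∑ j : Fin P, f (Sum.inr (⟨u, hu⟩, i)) (Sum.inr (⟨v, hv⟩, j)) := by
  unfold flatten
  rw [sum_fiber_mem S P hu (fun x => ∑ y, if proj S P y = v then f x y else 0)]
  exact Finset.sum_congr rfl fun i _ => sum_fiber_mem S P hv _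

/-- Lift a flow on `V` to the replicated graph, splitting evenly among copies. -/
def lift (g : V → V → ℝ) :
    ({v : V // v ∉ S} ⊕ (↥S × Fin P)) → ({v : V // v ∉ S} ⊕ (↥S × Fin P)) → ℝ
  | Sum.inl u, Sum.inl v => g u.1 v.1
  | Sum.inl u, Sum.inr (v, _) => g u.1 v.1 / P
  | Sum.inr (u, _), Sum.inl v => g u.1 v.1 / P
  | Sum.inr (u, i), Sum.inr (v, j) => if i = j then g u.1 v.1 / P else 0

lemma lift_row_inl (hP : 0 < P) (g : V → V → ℝ) (u : {v : V // v ∉ S}) :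
    ∑ y, lift S P g (Sum.inl u) y = ∑ v, g u.1 v := by
  have hP' : (P : ℝ) ≠ 0 := Nat.cast_ne_zero.2 hP.ne'
  rw [Fintype.sum_sum_type, Fintype.sum_prod_type, sum_split S (g u.1), add_comm]
  simp only [lift]
  congr 1
  apply Finset.sum_congr rfl
  intro v _
  rw [Finset.sum_const, Finset.card_univ, Fintype.card_fin, nsmul_eq_mul,
    mul_div_cancel₀ _ hP']

lemma lift_col_inl (hP : 0 < P) (g : V → V → ℝ) (u : {v : V // v ∉ S}) :
    ∑ x, lift S P g x (Sum.inl u) = ∑ v, g v u.1 := by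
  have hP' : (P : ℝ) ≠ 0 := Nat.cast_ne_zero.2 hP.ne'
  rw [Fintype.sum_sum_type, Fintype.sum_prod_type, sum_split S (fun v => g v u.1), add_comm]
  simp only [lift]
  congr 1
  apply Finset.sum_congr rfl
  intro v _
  rw [Finset.sum_const, Finset.card_univ, Fintype.card_fin, nsmul_eq_mul,
    mul_div_cancel₀ _ hP']

lemma lift_row_inr (g : V → V → ℝ) (u : ↥S) (i : Fin P) :
    ∑ y, lift S P g (Sum.inr (u, i)) y = (∑ v, g u.1 v) / P := by
  rw [Fintype.sum_sum_type, Fintype.sum_prod_type, sum_split S (g u.1), add_div,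
    Finset.sum_div, Finset.sum_div, add_comm]
  simp only [lift]
  congr 1
  apply Finset.sum_congr rfl
  intro v _
  simp [Finset.sum_ite_eq]

lemma lift_col_inr (g : V → V → ℝ) (v : ↥S) (j : Fin P) :
    ∑ x, lift S P g x (Sum.inr (v, j)) = (∑ u, g u v.1) / P := by
  rw [Fintype.sum_sum_type, Fintype.sum_prod_type, sum_split S (fun u => g u v.1), add_div,
    Finset.sum_div, Finset.sum_div, add_comm]
  simp only [lift]
  congr 1
  apply Finset.sum_congr rfl
  intro u _
  simp [Finset.sum_ite_eq']

omit [Fintype V] in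
lemma reweight_coe (c : V → V → NNReal) (u v : V) :
    ((reweight c S P u v : NNReal) : ℝ) = if u ∈ S ∨ v ∈ S then (P : ℝ) * c u v else c u v := by
  unfold reweight
  split <;> simp

end Aux

theorem maxFlow_repCap_eq_maxFlow_reweight {V : Type*} [Fintype V]
    (c : V → V → NNReal) (S : Set V) (P : ℕ) (hP : 1 ≤ P)
    (s t : V) (hst : s ≠ t) (hs : s ∉ S) (ht : t ∉ S) :
    maxFlowValue (repCap c S P) (Sum.inl ⟨s, hs⟩) (Sum.inl ⟨t, ht⟩) =
      maxFlowValue (reweight c S P) s t := by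
  have hPpos : 0 < P := hP
  have hP' : (0 : ℝ) < P := by exact_mod_cast hPpos
  unfold maxFlowValue
  congr 1
  ext μ
  simp only [Set.mem_setOf_eq]
  constructor
  · rintro ⟨f, hf, hval⟩
    refine ⟨flatten S P f, ⟨?_, ?_⟩, ?_⟩
    · -- capacity bounds
      intro u v
      constructor
      · refine Finset.sum_nonneg fun x _ => ?_
        by_cases h : proj S P x = u
        · rw [if_pos h]
          refine Finset.sum_nonneg fun y _ => ?_
          by_cases h' : proj S P y = v
          · rw [if_pos h']; exact (hf.1 x y).1
          · rw [if_neg h']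
        · rw [if_neg h]
      · rw [reweight_coe]
        by_cases hu : u ∈ S <;> by_cases hv : v ∈ S
        · rw [flatten_eval_ss S P f hu hv, if_pos (Or.inl hu)]
          calc ∑ i : Fin P, ∑ j : Fin P, f (Sum.inr (⟨u, hu⟩, i)) (Sum.inr (⟨v, hv⟩, j))
              ≤ ∑ i : Fin P, ∑ j : Fin P, (if i = j then ((c u v : NNReal) : ℝ) else 0) := by
                refine Finset.sum_le_sum fun i _ => Finset.sum_le_sum fun j _ => ?_
                have := (hf.1 (Sum.inr (⟨u, hu⟩, i)) (Sum.inr (⟨v, hv⟩, j))).2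
                simpa [repCap, apply_ite (fun x : NNReal => (x : ℝ))] using this
            _ = ∑ _i : Fin P, ((c u v : NNReal) : ℝ) := by
                refine Finset.sum_congr rfl fun i _ => ?_
                simp [Finset.sum_ite_eq]
            _ = (P : ℝ) * c u v := by
                rw [Finset.sum_const, Finset.card_univ, Fintype.card_fin, nsmul_eq_mul]
        · rw [flatten_eval_sn S P f hu hv, if_pos (Or.inl hu)]
          calc ∑ i : Fin P, f (Sum.inr (⟨u, hu⟩, i)) (Sum.inl ⟨v, hv⟩)
              ≤ ∑ _i : Fin P, ((c u v : NNReal) : ℝ) :=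
                Finset.sum_le_sum fun i _ =>
                  (hf.1 (Sum.inr (⟨u, hu⟩, i)) (Sum.inl ⟨v, hv⟩)).2
            _ = (P : ℝ) * c u v := by
                rw [Finset.sum_const, Finset.card_univ, Fintype.card_fin, nsmul_eq_mul]
        · rw [flatten_eval_ns S P f hu hv, if_pos (Or.inr hv)]
          calc ∑ i : Fin P, f (Sum.inl ⟨u, hu⟩) (Sum.inr (⟨v, hv⟩, i))
              ≤ ∑ _i : Fin P, ((c u v : NNReal) : ℝ) :=
                Finset.sum_le_sum fun i _ =>
                  (hf.1 (Sum.inl ⟨u, hu⟩) (Sum.inr (⟨v, hv⟩, i))).2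
            _ = (P : ℝ) * c u v := by
                rw [Finset.sum_const, Finset.card_univ, Fintype.card_fin, nsmul_eq_mul]
        · rw [flatten_eval_nn S P f hu hv, if_neg (by tauto)]
          exact (hf.1 (Sum.inl ⟨u, hu⟩) (Sum.inl ⟨v, hv⟩)).2
    · -- conservation
      intro v hvs hvt
      rw [flatten_col, flatten_row]
      apply Finset.sum_congr rfl
      intro y _
      by_cases h : proj S P y = v
      · rw [if_pos h, if_pos h]
        refine hf.2 y ?_ ?_
        · intro he
          exact hvs (by rw [← h, he]; rfl)
        · intro he
          exact hvt (by rw [← h, he]; rfl)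
      · rw [if_neg h, if_neg h]
    · -- value
      unfold flowValue
      rw [flatten_row, flatten_col,
        sum_fiber_not_mem S P hs (fun x => ∑ z, f x z),
        sum_fiber_not_mem S P hs (fun y => ∑ x, f x y)]
      exact hval
  · rintro ⟨g, hg, hval⟩
    refine ⟨lift S P g, ⟨?_, ?_⟩, ?_⟩
    · -- capacity bounds
      rintro (u | ⟨u, i⟩) (v | ⟨v, j⟩)
      · have hb := (hg.1 u.1 v.1).2
        rw [reweight_coe, if_neg (by push_neg; exact ⟨u.2, v.2⟩)] at hb
        exact ⟨(hg.1 u.1 v.1).1, hb⟩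
      · have hb := (hg.1 u.1 v.1).2
        rw [reweight_coe, if_pos (Or.inr v.2)] at hb
        refine ⟨div_nonneg (hg.1 u.1 v.1).1 hP'.le, ?_⟩
        show g u.1 v.1 / P ≤ ((c u.1 v.1 : NNReal) : ℝ)
        rw [div_le_iff₀ hP']
        linarith
      · have hb := (hg.1 u.1 v.1).2
        rw [reweight_coe, if_pos (Or.inl u.2)] at hb
        refine ⟨div_nonneg (hg.1 u.1 v.1).1 hP'.le, ?_⟩
        show g u.1 v.1 / P ≤ ((c u.1 v.1 : NNReal) : ℝ)
        rw [div_le_iff₀ hP']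
        linarith
      · have hb := (hg.1 u.1 v.1).2
        rw [reweight_coe, if_pos (Or.inl u.2)] at hb
        by_cases h : i = j
        · refine ⟨?_, ?_⟩
          · show (0:ℝ) ≤ if i = j then g u.1 v.1 / P else 0
            rw [if_pos h]
            exact div_nonneg (hg.1 u.1 v.1).1 hP'.le
          · show (if i = j then g u.1 v.1 / P else 0) ≤ ((repCap c S P _ _ : NNReal) : ℝ)
            rw [if_pos h, show repCap c S P (Sum.inr (u, i)) (Sum.inr (v, j))
              = if i = j then c u.1 v.1 else 0 from rfl, if_pos h]
            rw [div_le_iff₀ hP']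
            linarith
        · refine ⟨?_, ?_⟩
          · show (0:ℝ) ≤ if i = j then g u.1 v.1 / P else 0
            rw [if_neg h]
          · show (if i = j then g u.1 v.1 / P else 0) ≤ ((repCap c S P _ _ : NNReal) : ℝ)
            rw [if_neg h]
            exact (repCap c S P (Sum.inr (u, i)) (Sum.inr (v, j))).2
    · -- conservation
      rintro (v | ⟨v, i⟩) hxs hxt
      · rw [lift_col_inl S P hPpos, lift_row_inl S P hPpos]
        refine hg.2 v.1 ?_ ?_
        · exact fun h => hxs (congrArg Sum.inl (Subtype.ext h))
        · exact fun h => hxt (congrArg Sum.inl (Subtype.ext h))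
      · rw [lift_col_inr, lift_row_inr]
        congr 1
        refine hg.2 v.1 ?_ ?_
        · exact fun h => hs (h ▸ v.2)
        · exact fun h => ht (h ▸ v.2)
    · -- value
      unfold flowValue
      rw [lift_row_inl S P hPpos g ⟨s, hs⟩, lift_col_inl S P hPpos g ⟨s, hs⟩]
      exact hval

end
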